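/- arXiv:gr-qc/0604111 — 2 statements merged into one kernel-verified Lean document; each statement's English description precedes it below -/
import Mathlib

section
/- If Γ is a linear connection on a manifold M with vanishing curvature tensor, and Γ̃ is the dual connection defined by Γ̃^α_{μν} := Γ^α_{νμ}, then the curvature tensor of Γ̃ satisfies R̃^α_{μνσ} = Λ^α_{σν|μ}, where Λ^α_{μν} = Γ^α_{μν} − Γ^α_{νμ} is the torsion of Γ and | denotes covariant differentiation with respect to Γ. -/
/- Local coordinate formalization of linear connections, curvature, torsion and
covariant differentiation, following the index conventions of the paper:
A^μ_{|ν} = A^μ_{,ν} + Γ^μ_{εν} A^ε, and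
R^α_{μνσ} = Γ^α_{μσ,ν} − Γ^α_{μν,σ} + Γ^ε_{μσ}Γ^α_{εν} − Γ^ε_{μν}Γ^α_{εσ}. -/

noncomputable section

open scoped BigOperators

/-- Partial derivative of a scalar field in the direction of the ν-th coordinate. -/
def pd {n : ℕ} (f : (Fin n → ℝ) → ℝ) (ν : Fin n) (x : Fin n → ℝ) : ℝ :=
  fderiv ℝ f x (Pi.single ν 1)

/-- Coefficients Γ^α_{μν} of a linear connection (in global coordinates on ℝⁿ). -/
abbrev Conn (n : ℕ) := Fin n → Fin n → Fin n → (Fin n → ℝ) → ℝ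

/-- Curvature tensor R^α_{μνσ} of a linear connection. -/
def curv {n : ℕ} (Γ : Conn n) (α μ ν σ : Fin n) (x : Fin n → ℝ) : ℝ :=
  pd (Γ α μ σ) ν x - pd (Γ α μ ν) σ x
    + ∑ ε, Γ ε μ σ x * Γ α ε ν x - ∑ ε, Γ ε μ ν x * Γ α ε σ x

/-- Torsion tensor Λ^α_{μν} = Γ^α_{μν} − Γ^α_{νμ}. -/
def torsion {n : ℕ} (Γ : Conn n) : Conn n := fun α μ ν x => Γ α μ ν x - Γ α ν μ x

/-- The dual connection Γ̃^α_{μν} = Γ^α_{νμ}. -/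
def dualConn {n : ℕ} (Γ : Conn n) : Conn n := fun α μ ν => Γ α ν μ

/-- The symmetric connection Γ̂^α_{μν} = (1/2)(Γ^α_{μν} + Γ^α_{νμ}). -/
def symConn {n : ℕ} (Γ : Conn n) : Conn n := fun α μ ν x => (Γ α μ ν x + Γ α ν μ x) / 2

/-- Covariant derivative T^α_{μν|σ} of a (1,2)-tensor field with respect to Γ. -/
def covd12 {n : ℕ} (Γ T : Conn n) (α μ ν σ : Fin n) (x : Fin n → ℝ) : ℝ :=
  pd (T α μ ν) σ x + ∑ ε, Γ α ε σ x * T ε μ ν x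
    - ∑ ε, Γ ε μ σ x * T α ε ν x - ∑ ε, Γ ε ν σ x * T α μ ε x

/-- Covariant derivative w_{μ|ν} of a covector field with respect to Γ. -/
def covd01 {n : ℕ} (Γ : Conn n) (w : Fin n → (Fin n → ℝ) → ℝ) (μ ν : Fin n)
    (x : Fin n → ℝ) : ℝ :=
  pd (w μ) ν x - ∑ ε, Γ ε μ ν x * w ε x

/-- Covariant derivative T_{μν|σ} of a (0,2)-tensor field with respect to Γ. -/
def covd02 {n : ℕ} (Γ : Conn n) (T : Fin n → Fin n → (Fin n → ℝ) → ℝ) (μ ν σ : Fin n)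
    (x : Fin n → ℝ) : ℝ :=
  pd (T μ ν) σ x - ∑ ε, Γ ε μ σ x * T ε ν x - ∑ ε, Γ ε ν σ x * T μ ε x

/-- Covariant derivative T^α_{μνσ|β} of a (1,3)-tensor field with respect to Γ. -/
def covd13 {n : ℕ} (Γ : Conn n) (T : Fin n → Fin n → Fin n → Fin n → (Fin n → ℝ) → ℝ)
    (α μ ν σ β : Fin n) (x : Fin n → ℝ) : ℝ :=
  pd (T α μ ν σ) β x + ∑ ε, Γ α ε β x * T ε μ ν σ x
    - ∑ ε, Γ ε μ β x * T α ε ν σ x - ∑ ε, Γ ε ν β x * T α μ ε σ x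
    - ∑ ε, Γ ε σ β x * T α μ ν ε x

/-- The Wanas tensor W^α_{μνσ} = Λ^α_{σν|μ} − Λ^ε_{σν} Λ^α_{εμ}. -/
def Wanas {n : ℕ} (Γ : Conn n) (α μ ν σ : Fin n) (x : Fin n → ℝ) : ℝ :=
  covd12 Γ (torsion Γ) α σ ν μ x - ∑ ε, torsion Γ ε σ ν x * torsion Γ α ε μ x

/-- The connection is smooth. -/
def SmoothConn {n : ℕ} (Γ : Conn n) : Prop := ∀ α μ ν, ContDiff ℝ (⊤ : ℕ∞) (Γ α μ ν)

/-- The connection has identically vanishing curvature. -/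
def Flat {n : ℕ} (Γ : Conn n) : Prop := ∀ α μ ν σ x, curv Γ α μ ν σ x = 0

/-- For a flat connection Γ, the curvature of the dual connection is
R̃^α_{μνσ} = Λ^α_{σν|μ}. -/
theorem dual_curvature_eq_covd_torsion {n : ℕ} (Γ : Conn n)
    (hs : SmoothConn Γ) (hflat : Flat Γ) :
    ∀ (α μ ν σ : Fin n) (x : Fin n → ℝ),
      curv (dualConn Γ) α μ ν σ x = covd12 Γ (torsion Γ) α σ ν μ x := by
  intro α μ ν σ x
  have hpd : ∀ (a b c k : Fin n),
      pd (torsion Γ a b c) k x = pd (Γ a b c) k x - pd (Γ a c b) k x := by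
    intro a b c k
    have h1 : DifferentiableAt ℝ (Γ a b c) x :=
      ((hs a b c).differentiable (by simp)).differentiableAt
    have h2 : DifferentiableAt ℝ (Γ a c b) x :=
      ((hs a c b).differentiable (by simp)).differentiableAt
    have : torsion Γ a b c = fun y => Γ a b c y - Γ a c b y := rfl
    rw [pd, pd, pd, this, fderiv_fun_sub h1 h2]
    simp
  have h1 := hflat α σ μ ν x
  have h2 := hflat α ν μ σ x
  simp only [curv] at h1 h2
  simp only [curv, dualConn, covd12, hpd]
  have tdef : ∀ (a b c : Fin n) (y : Fin n → ℝ),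
      torsion Γ a b c y = Γ a b c y - Γ a c b y := fun _ _ _ _ => rfl
  simp only [tdef, mul_sub, sub_mul, Finset.sum_sub_distrib]
  have c1 : ∑ ε, Γ α ε μ x * Γ ε σ ν x = ∑ ε, Γ ε σ ν x * Γ α ε μ x := by
    simp [mul_comm]
  have c2 : ∑ ε, Γ α ε μ x * Γ ε ν σ x = ∑ ε, Γ ε ν σ x * Γ α ε μ x := by
    simp [mul_comm]
  have c3 : ∑ ε, Γ ε σ μ x * Γ α ν ε x = ∑ ε, Γ α ν ε x * Γ ε σ μ x := by
    simp [mul_comm]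
  have c4 : ∑ ε, Γ ε ν μ x * Γ α σ ε x = ∑ ε, Γ α σ ε x * Γ ε ν μ x := by
    simp [mul_comm]
  linarith
end
end

section
/- If Γ is a flat linear connection (vanishing curvature) with torsion Λ, then the curvature of the symmetric connection Γ̂^α_{μν} := (1/2)(Γ^α_{μν} + Γ^α_{νμ}) is R̂^α_{μνσ} = (1/2)(Λ^α_{μν|σ} − Λ^α_{μσ|ν}) + (1/4)(Λ^ε_{μν}Λ^α_{σε} − Λ^ε_{μσ}Λ^α_{νε}) + (1/2)Λ^ε_{σν}Λ^α_{εμ}, where | is covariant differentiation with respect to Γ. -/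
/- Local coordinate formalization of linear connections, curvature, torsion and
covariant differentiation, following the index conventions of the paper:
A^μ_{|ν} = A^μ_{,ν} + Γ^μ_{εν} A^ε, and
R^α_{μνσ} = Γ^α_{μσ,ν} − Γ^α_{μν,σ} + Γ^ε_{μσ}Γ^α_{εν} − Γ^ε_{μν}Γ^α_{εσ}. -/

noncomputable section

open scoped BigOperators

private lemma pd_sub {n : ℕ} (f g : (Fin n → ℝ) → ℝ) (ν : Fin n) (x : Fin n → ℝ)
    (hf : DifferentiableAt ℝ f x) (hg : DifferentiableAt ℝ g x) :
    pd (fun y => f y - g y) ν x = pd f ν x - pd g ν x := by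
  simp [pd, fderiv_fun_sub hf hg]

private lemma pd_symConn {n : ℕ} (Γ : Conn n) (hs : SmoothConn Γ) (α μ ν σ : Fin n)
    (x : Fin n → ℝ) :
    pd (symConn Γ α μ ν) σ x = (pd (Γ α μ ν) σ x + pd (Γ α ν μ) σ x) / 2 := by
  have h1 := ((hs α μ ν).differentiable (by simp)).differentiableAt (x := x)
  have h2 := ((hs α ν μ).differentiable (by simp)).differentiableAt (x := x)
  have e : symConn Γ α μ ν = fun y => (Γ α μ ν y + Γ α ν μ y) / 2 := rfl
  rw [e]
  simp [pd, div_eq_mul_inv, fderiv_mul_const (h1.fun_add h2), fderiv_fun_add h1 h2]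
  ring

private lemma pd_torsion {n : ℕ} (Γ : Conn n) (hs : SmoothConn Γ) (α μ ν σ : Fin n)
    (x : Fin n → ℝ) :
    pd (torsion Γ α μ ν) σ x = pd (Γ α μ ν) σ x - pd (Γ α ν μ) σ x := by
  have h1 := ((hs α μ ν).differentiable (by simp)).differentiableAt (x := x)
  have h2 := ((hs α ν μ).differentiable (by simp)).differentiableAt (x := x)
  have e : torsion Γ α μ ν = fun y => Γ α μ ν y - Γ α ν μ y := rfl
  rw [e]
  simp [pd, fderiv_fun_sub h1 h2]

private lemma sum_mul_const {n : ℕ} (f g : Fin n → ℝ) (c : ℝ) :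
    ∑ i, f i * (g i * c) = c * ∑ i, f i * g i := by
  rw [Finset.mul_sum]; exact Finset.sum_congr rfl fun i _ => by ring

/-- curvature of the symmetric connection of a flat connection. -/
theorem sym_curvature_formula {n : ℕ} (Γ : Conn n)
    (hs : SmoothConn Γ) (hflat : Flat Γ) :
    ∀ (α μ ν σ : Fin n) (x : Fin n → ℝ),
      curv (symConn Γ) α μ ν σ x =
        (1/2) * (covd12 Γ (torsion Γ) α μ ν σ x - covd12 Γ (torsion Γ) α μ σ ν x)
        + (1/4) * ((∑ ε, torsion Γ ε μ ν x * torsion Γ α σ ε x)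
                  - ∑ ε, torsion Γ ε μ σ x * torsion Γ α ν ε x)
        + (1/2) * ∑ ε, torsion Γ ε σ ν x * torsion Γ α ε μ x := by
  intro α μ ν σ x
  have key := hflat α μ ν σ x
  simp only [curv] at key
  simp only [curv, covd12, symConn, torsion,
    pd_symConn Γ hs, pd_torsion Γ hs]
  simp only [div_eq_mul_inv, mul_add, add_mul, mul_sub, sub_mul, mul_comm,
    mul_left_comm, mul_assoc, Finset.sum_add_distrib, Finset.sum_sub_distrib,
    ← Finset.mul_sum] at key ⊢
  simp only [sum_mul_const]
  linear_combination key
end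
end
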